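/- arXiv:1902.09678 — 2 statements merged into one kernel-verified Lean document; each statement's English description precedes it below -/
import Mathlib

section
/- Fix integers d ≥ 2 and n ≥ 1. There exists a positive constant c_{d,n} > 0 such that for all 0 < δ < c_{d,n} the following holds: if the anisotropy parameters satisfy (1/2)δ^i ≤ λ_i^{(k)} ≤ 2δ^i for all 1 ≤ i ≤ n and 1 ≤ k ≤ d, then the PVBS Hamiltonian H_L is gapped, i.e. inf_{L ≥ 2} γ_L > 0. -/
open scoped BigOperators ComplexOrder Matrix

namespace PVBS

/-- The standard basis vector `|a ⊗ b⟩` of `ℂ^{n+1} ⊗ ℂ^{n+1}`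
(realized as functions on `Fin (n+1) × Fin (n+1)`). -/
def ketPair {n : ℕ} (a b : Fin (n + 1)) : Fin (n + 1) × Fin (n + 1) → ℂ :=
  fun p => if p = (a, b) then 1 else 0

/-- The orthogonal projection onto the span of the vector `v` (interpreted as `0` if `v = 0`). -/
noncomputable def projOnto {P : Type*} [Fintype P] (v : P → ℂ) : Matrix P P ℂ :=
  ((∑ p, Complex.normSq (v p) : ℝ) : ℂ)⁻¹ • Matrix.of fun a b => v a * (starRingEnd ℂ) (v b)

/-- The vector `φ_i = |0 ⊗ i⟩ − λ_i |i ⊗ 0⟩` (the species `1 ≤ i ≤ n` is encoded as `i : Fin n`,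
with corresponding basis element `i.succ : Fin (n+1)`). -/
def phiA {n : ℕ} (lam : ℝ) (i : Fin n) : Fin (n + 1) × Fin (n + 1) → ℂ :=
  fun p => ketPair 0 i.succ p - (lam : ℂ) * ketPair i.succ 0 p

/-- The vector `φ_{ij} = λ_i |i ⊗ j⟩ − λ_j |j ⊗ i⟩` for `i < j`. -/
def phiB {n : ℕ} (lami lamj : ℝ) (i j : Fin n) : Fin (n + 1) × Fin (n + 1) → ℂ :=
  fun p => (lami : ℂ) * ketPair i.succ j.succ p - (lamj : ℂ) * ketPair j.succ i.succ p

/-- The vector `φ_{ii} = |i ⊗ i⟩`. -/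
def phiC {n : ℕ} (i : Fin n) : Fin (n + 1) × Fin (n + 1) → ℂ := ketPair i.succ i.succ

/-- The local PVBS interaction `h^{(k)}` in a fixed direction `k`, built from the anisotropy
parameters `lam i = λ_{i+1}^{(k)}`: the sum of the orthogonal projections onto the normalized
versions of the vectors `φ_i` (for `1 ≤ i ≤ n`) and `φ_{ij}` (for `1 ≤ i ≤ j ≤ n`). -/
noncomputable def hloc {n : ℕ} (lam : Fin n → ℝ) :
    Matrix (Fin (n + 1) × Fin (n + 1)) (Fin (n + 1) × Fin (n + 1)) ℂ :=
  (∑ i, projOnto (phiA (lam i) i)) +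
    ∑ i, ∑ j,
      if i < j then projOnto (phiB (lam i) (lam j) i j)
      else if i = j then projOnto (phiC i) else 0

/-- The reference interaction `h̃ = Σ_{i=1}^n |0⊗i⟩⟨0⊗i| + Σ_{1≤i≤j≤n} |i⊗j⟩⟨i⊗j|`
(the `δ = 0` model). -/
noncomputable def htilde (n : ℕ) :
    Matrix (Fin (n + 1) × Fin (n + 1)) (Fin (n + 1) × Fin (n + 1)) ℂ :=
  (∑ i : Fin n, projOnto (ketPair 0 i.succ)) +
    ∑ i : Fin n, ∑ j : Fin n, if i ≤ j then projOnto (ketPair i.succ j.succ) else 0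

/-- The embedding of a two-site operator `h2` at the ordered pair of sites `(x, y)` of `V`,
acting as the identity on all other sites. -/
def embed {n : ℕ} {V : Type*} [Fintype V] [DecidableEq V] (x y : V)
    (h2 : Matrix (Fin (n + 1) × Fin (n + 1)) (Fin (n + 1) × Fin (n + 1)) ℂ) :
    Matrix (V → Fin (n + 1)) (V → Fin (n + 1)) ℂ :=
  Matrix.of fun σ τ =>
    if ∀ z, z ≠ x → z ≠ y → σ z = τ z then h2 (σ x, σ y) (τ x, τ y) else 0

/-- The spectral gap of a matrix: the smallest positive (real) element of its spectrum
(by convention `sInf ∅ = 0` if there is none). -/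
noncomputable def gap {I : Type*} [Fintype I] [DecidableEq I] (M : Matrix I I ℂ) : ℝ :=
  sInf {γ : ℝ | 0 < γ ∧ (γ : ℂ) ∈ spectrum ℂ M}

/-! ### The periodic box `Λ_L = (ZMod N)^d`, `N = 2L`. -/

/-- The neighbor `x + e_k` of the site `x` on the torus `(ZMod N)^d`. -/
def nbrT {d N : ℕ} (x : Fin d → ZMod N) (k : Fin d) : Fin d → ZMod N :=
  fun j => if j = k then x j + 1 else x j

/-- The interaction term `h_e = h^{(k)}_{x, x+e_k}` attached to the oriented edge
`e = (x, k)` of the torus. -/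
noncomputable def hedge {n d N : ℕ} [NeZero N] (lam : Fin n → Fin d → ℝ)
    (e : (Fin d → ZMod N) × Fin d) :
    Matrix ((Fin d → ZMod N) → Fin (n + 1)) ((Fin d → ZMod N) → Fin (n + 1)) ℂ :=
  embed e.1 (nbrT e.1 e.2) (hloc fun i => lam i e.2)

/-- The PVBS Hamiltonian `H_L = Σ_{x ∈ Λ_L} Σ_{k=1}^d h^{(k)}_{x,x+e_k}` on the periodic
box `Λ_L = (ZMod N)^d` with `N = 2L`. -/
noncomputable def HL (n d N : ℕ) [NeZero N] (lam : Fin n → Fin d → ℝ) :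
    Matrix ((Fin d → ZMod N) → Fin (n + 1)) ((Fin d → ZMod N) → Fin (n + 1)) ℂ :=
  ∑ e : (Fin d → ZMod N) × Fin d, hedge lam e

/-- The (unordered) endpoints of the oriented torus edge `e = (x, k)`. -/
def epT {d N : ℕ} (e : (Fin d → ZMod N) × Fin d) : Finset (Fin d → ZMod N) :=
  {e.1, nbrT e.1 e.2}

/-- `Q = Σ_{e ∼ e'} {h_e, h_{e'}}`: the sum over (unordered) pairs of torus edges sharing
exactly one vertex of the anticommutator `{h_e, h_{e'}}`, written as a sum of the products
`h_e * h_{e'}` over ordered pairs. -/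
noncomputable def QL (n d N : ℕ) [NeZero N] (lam : Fin n → Fin d → ℝ) :
    Matrix ((Fin d → ZMod N) → Fin (n + 1)) ((Fin d → ZMod N) → Fin (n + 1)) ℂ :=
  ∑ e : (Fin d → ZMod N) × Fin d, ∑ e' : (Fin d → ZMod N) × Fin d,
    if (epT e ∩ epT e').card = 1 then hedge lam e * hedge lam e' else 0

/-- `R = Σ_{e ≁ e'} {h_e, h_{e'}}`: the sum over (unordered) pairs of torus edges sharing
no vertex of the anticommutator `{h_e, h_{e'}}`, written as a sum of the products
`h_e * h_{e'}` over ordered pairs. -/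
noncomputable def RL (n d N : ℕ) [NeZero N] (lam : Fin n → Fin d → ℝ) :
    Matrix ((Fin d → ZMod N) → Fin (n + 1)) ((Fin d → ZMod N) → Fin (n + 1)) ℂ :=
  ∑ e : (Fin d → ZMod N) × Fin d, ∑ e' : (Fin d → ZMod N) × Fin d,
    if (epT e ∩ epT e').card = 0 then hedge lam e * hedge lam e' else 0

/-! ### Subgraphs of `ℤ^d` and the box on a stick `C_m`. -/

/-- The neighbor `x + e_k` of the site `x ∈ ℤ^d`. -/
def nbrZ {d : ℕ} (x : Fin d → ℤ) (k : Fin d) : Fin d → ℤ :=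
  fun j => if j = k then x j + 1 else x j

/-- The point `l·e_1 ∈ ℤ^d`. -/
def stickPt (d : ℕ) (l : ℕ) : Fin d → ℤ := fun k => if (k : ℕ) = 0 then (l : ℤ) else 0

/-- The stick `S = {0, e_1, …, (n−1)e_1} ⊂ ℤ^d`. -/
def stickF (d n : ℕ) : Finset (Fin d → ℤ) := (Finset.range n).image (stickPt d)

/-- The box `B_m = {Σ a_k e_k : n ≤ a_1 ≤ m+n, 0 ≤ a_k ≤ m for k ≥ 2} ⊂ ℤ^d`. -/
def boxF (d n m : ℕ) : Finset (Fin d → ℤ) :=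
  Finset.image
    (fun a : Fin d → Fin (m + 1) => fun k : Fin d =>
      if (k : ℕ) = 0 then (n : ℤ) + (a k : ℤ) else (a k : ℤ))
    Finset.univ

/-- The box on a stick `C_m = S ∪ B_m ⊂ ℤ^d`. -/
def CmF (d n m : ℕ) : Finset (Fin d → ℤ) := stickF d n ∪ boxF d n m

/-- The PVBS subsystem Hamiltonian `H_G = Σ_{e ∈ E_G} h_e` of a finite subgraph
`G ⊂ ℤ^d` (with one interaction term for every oriented lattice edge with both endpoints
in `G`), acting on `⊗_{x ∈ G} ℂ^{n+1}`. -/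
noncomputable def HG {d : ℕ} (n : ℕ) (lam : Fin n → Fin d → ℝ) (G : Finset (Fin d → ℤ)) :
    Matrix ({x // x ∈ G} → Fin (n + 1)) ({x // x ∈ G} → Fin (n + 1)) ℂ :=
  ∑ x : {x // x ∈ G}, ∑ k : Fin d,
    if h : nbrZ (x : Fin d → ℤ) k ∈ G then
      embed x ⟨nbrZ (x : Fin d → ℤ) k, h⟩ (hloc fun i => lam i k)
    else 0

/-- The PVBS Hamiltonian `H_{C_m}` of the box on a stick. -/
noncomputable def HCm (d n m : ℕ) (lam : Fin n → Fin d → ℝ) :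
    Matrix ({x // x ∈ CmF d n m} → Fin (n + 1)) ({x // x ∈ CmF d n m} → Fin (n + 1)) ℂ :=
  HG n lam (CmF d n m)

/-- The reference (`δ = 0`) Hamiltonian `H̃_G = Σ_{e ∈ E_G} h̃_e` of a finite subgraph
`G ⊂ ℤ^d`. -/
noncomputable def HtildeG {d : ℕ} (n : ℕ) (G : Finset (Fin d → ℤ)) :
    Matrix ({x // x ∈ G} → Fin (n + 1)) ({x // x ∈ G} → Fin (n + 1)) ℂ :=
  ∑ x : {x // x ∈ G}, ∑ k : Fin d,
    if h : nbrZ (x : Fin d → ℤ) k ∈ G then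
      embed x ⟨nbrZ (x : Fin d → ℤ) k, h⟩ (htilde n)
    else 0

/-! ### Translates `x + C_m` inside the torus. -/

/-- The interaction term of the lattice edge `(c, c + e_k)` of `ℤ^d`, translated by
`x` into the torus `(ZMod N)^d` (reducing coordinates mod `N`). -/
noncomputable def hedgeTrans {n d N : ℕ} [NeZero N] (lam : Fin n → Fin d → ℝ)
    (x : Fin d → ZMod N) (c : Fin d → ℤ) (k : Fin d) :
    Matrix ((Fin d → ZMod N) → Fin (n + 1)) ((Fin d → ZMod N) → Fin (n + 1)) ℂ :=
  embed (fun j => x j + (c j : ZMod N)) (fun j => x j + ((nbrZ c k) j : ZMod N))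
    (hloc fun i => lam i k)

/-- The subsystem Hamiltonian `H_{x+C_m}` of the translate `x + C_m ⊂ Λ_L`, acting on the
full torus Hilbert space. -/
noncomputable def HtransCm (n d N m : ℕ) [NeZero N] (lam : Fin n → Fin d → ℝ)
    (x : Fin d → ZMod N) :
    Matrix ((Fin d → ZMod N) → Fin (n + 1)) ((Fin d → ZMod N) → Fin (n + 1)) ℂ :=
  ∑ c : {y // y ∈ CmF d n m}, ∑ k : Fin d,
    if nbrZ (c : Fin d → ℤ) k ∈ CmF d n m then hedgeTrans lam x (c : Fin d → ℤ) k else 0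

/-- The (unordered) endpoints of the oriented lattice edge `(c, c + e_k)` of `ℤ^d`. -/
def epZ {d : ℕ} (c : Fin d → ℤ) (k : Fin d) : Finset (Fin d → ℤ) := {c, nbrZ c k}

/-- `Q_{x+C_m}`: the sum of the anticommutators `{h_e, h_{e'}}` over (unordered) pairs of
edges of `x + C_m` sharing exactly one vertex, written as a sum of products over ordered
pairs. -/
noncomputable def QtransCm (n d N m : ℕ) [NeZero N] (lam : Fin n → Fin d → ℝ)
    (x : Fin d → ZMod N) :
    Matrix ((Fin d → ZMod N) → Fin (n + 1)) ((Fin d → ZMod N) → Fin (n + 1)) ℂ :=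
  ∑ c : {y // y ∈ CmF d n m}, ∑ k : Fin d,
    ∑ c' : {y // y ∈ CmF d n m}, ∑ k' : Fin d,
      if nbrZ (c : Fin d → ℤ) k ∈ CmF d n m ∧ nbrZ (c' : Fin d → ℤ) k' ∈ CmF d n m ∧
          (epZ (c : Fin d → ℤ) k ∩ epZ (c' : Fin d → ℤ) k').card = 1 then
        hedgeTrans lam x (c : Fin d → ℤ) k * hedgeTrans lam x (c' : Fin d → ℤ) k'
      else 0

/-- `R_{x+C_m}`: the sum of the anticommutators `{h_e, h_{e'}}` over (unordered) pairs of
vertex-disjoint edges of `x + C_m`, written as a sum of products over ordered pairs. -/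
noncomputable def RtransCm (n d N m : ℕ) [NeZero N] (lam : Fin n → Fin d → ℝ)
    (x : Fin d → ZMod N) :
    Matrix ((Fin d → ZMod N) → Fin (n + 1)) ((Fin d → ZMod N) → Fin (n + 1)) ℂ :=
  ∑ c : {y // y ∈ CmF d n m}, ∑ k : Fin d,
    ∑ c' : {y // y ∈ CmF d n m}, ∑ k' : Fin d,
      if nbrZ (c : Fin d → ℤ) k ∈ CmF d n m ∧ nbrZ (c' : Fin d → ℤ) k' ∈ CmF d n m ∧
          (epZ (c : Fin d → ℤ) k ∩ epZ (c' : Fin d → ℤ) k').card = 0 then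
        hedgeTrans lam x (c : Fin d → ℤ) k * hedgeTrans lam x (c' : Fin d → ℤ) k'
      else 0

/-- The particle number operator `N_i` of species `1 ≤ i ≤ n` on `⊗_{x ∈ G} ℂ^{n+1}`:
diagonal in the product basis, counting the sites carrying the label `i`. -/
noncomputable def Nop {d : ℕ} {n : ℕ} (G : Finset (Fin d → ℤ)) (i : Fin n) :
    Matrix ({x // x ∈ G} → Fin (n + 1)) ({x // x ∈ G} → Fin (n + 1)) ℂ :=
  Matrix.diagonal fun σ => ((Finset.univ.filter fun x => σ x = i.succ).card : ℂ)

/-- The product basis vector of `⊗_{x} ℂ^{n+1}` labelled by the configuration `σ`. -/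
def bvec {I : Type*} [DecidableEq I] (σ : I) : I → ℂ := fun τ => if τ = σ then 1 else 0

end PVBS

/-!
Every positive eigenvalue of `H_L` is at least `1/4`, by Gershgorin's theorem in the product basis.
In that basis `h^{(k)}` maps `|a ⊗ b⟩` to `D(a,b) |a ⊗ b⟩ - H(a,b) |b ⊗ a⟩` with
`D(a,b) = ν_a² / (ν_a² + ν_b²)` and `H(a,b) = ν_a ν_b / (ν_a² + ν_b²)` for `a ≠ b`, where
`ν = (1, λ_1, …, λ_n)`, so the Gershgorin disc of a configuration `σ` lies to the right of
`Σ_e (D - H)`. For small `δ` the weights decrease geometrically with ratio `ε = 4δ`, which gives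
`D(a,b) - H(a,b) ≥ ε (b - a)` on every edge, plus `1/4` if `a ≤ b ≠ 0`. On the periodic torus the
potential differences `ε (b - a)` sum to zero, and for `σ ≠ 0` the edge pointing into a site where
`σ` is maximal contributes the `1/4`. The vacuum row vanishes, and the configuration with species `1`
everywhere is an eigenvector with positive eigenvalue, so the set defining the gap is nonempty.
-/

lemma Matrix.exists_norm_sub_diag_le_of_mem_spectrum {ι : Type*} [Fintype ι] [DecidableEq ι]
    {A : Matrix ι ι ℂ} {μ : ℂ} (h : μ ∈ spectrum ℂ A) :
    ∃ k, ‖μ - A k k‖ ≤ ∑ j ∈ Finset.univ.erase k, ‖A k j‖ := by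
  have hμ : Module.End.HasEigenvalue (Matrix.toLin' A) μ :=
    Module.End.hasEigenvalue_iff_mem_spectrum.mpr (by rwa [Matrix.spectrum_toLin'])
  obtain ⟨k, hk⟩ := eigenvalue_mem_ball hμ
  exact ⟨k, by simpa [dist_eq_norm] using hk⟩

lemma Matrix.mem_spectrum_of_mulVec_eq_smul {ι : Type*} [Fintype ι] [DecidableEq ι]
    {A : Matrix ι ι ℂ} {μ : ℂ} {v : ι → ℂ} (hv : v ≠ 0) (h : A *ᵥ v = μ • v) :
    μ ∈ spectrum ℂ A := by
  have hμ : Module.End.HasEigenvector (Matrix.toLin' A) μ v :=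
    ⟨Module.End.mem_eigenspace_iff.mpr (by simpa using h), hv⟩
  simpa using (Module.End.hasEigenvalue_of_hasEigenvector hμ).mem_spectrum

namespace PVBS

section ProjOnto

variable {P : Type*} [Fintype P]

lemma projOnto_apply (v : P → ℂ) (p q : P) :
    projOnto v p q = ((∑ r, Complex.normSq (v r) : ℝ) : ℂ)⁻¹ * (v p * starRingEnd ℂ (v q)) :=
  rfl

lemma projOnto_apply_eq_zero {v : P → ℂ} {p : P} (hp : v p = 0) (q : P) :
    projOnto v p q = 0 := by
  simp [projOnto_apply, hp]

lemma projOnto_neg (v : P → ℂ) : projOnto (-v) = projOnto v := by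
  ext p q
  simp [projOnto_apply]

end ProjOnto

section LocalInteraction

variable {n : ℕ}

/-- The weights `ν = (1, λ_1, …, λ_n)` of the single-site states `|0⟩, |1⟩, …, |n⟩`. -/
def nu (ℓ : Fin n → ℝ) : Fin (n + 1) → ℝ := Fin.cons 1 ℓ

/-- For `a = 0 < b` and `0 < a < b` these are the vectors `φ_b` and `φ_{ab}`. -/
def pairVec (ν : Fin (n + 1) → ℝ) (a b : Fin (n + 1)) : Fin (n + 1) × Fin (n + 1) → ℂ :=
  fun p => (ν a : ℂ) * ketPair a b p - (ν b : ℂ) * ketPair b a p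

lemma pairVec_swap (ν : Fin (n + 1) → ℝ) (a b : Fin (n + 1)) :
    pairVec ν b a = -pairVec ν a b := by
  funext p
  simp only [pairVec, Pi.neg_apply]
  ring

noncomputable def pairProj (ν : Fin (n + 1) → ℝ) (a b : Fin (n + 1)) :
    Matrix (Fin (n + 1) × Fin (n + 1)) (Fin (n + 1) × Fin (n + 1)) ℂ :=
  if a < b then projOnto (pairVec ν a b) else if a = b ∧ a ≠ 0 then projOnto (ketPair a a) else 0

lemma hloc_eq_sum_pairProj (ℓ : Fin n → ℝ) : hloc ℓ = ∑ a, ∑ b, pairProj (nu ℓ) a b := by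
  have hA (j : Fin n) : pairVec (nu ℓ) 0 j.succ = phiA (ℓ j) j := by
    funext p
    simp [pairVec, phiA, nu]
  have hB (i j : Fin n) : pairVec (nu ℓ) i.succ j.succ = phiB (ℓ i) (ℓ j) i j := by
    funext p
    simp [pairVec, phiB, nu]
  simp [Fin.sum_univ_succ (n := n), pairProj, Fin.succ_pos, hA, hB, hloc, phiC]

variable {ν : Fin (n + 1) → ℝ}

lemma pairProj_apply_eq_zero {x p : Fin (n + 1) × Fin (n + 1)} (hp : x ≠ p) (hp' : x ≠ p.swap)
    (q : Fin (n + 1) × Fin (n + 1)) : pairProj ν x.1 x.2 p q = 0 := by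
  obtain ⟨a, b⟩ := x
  have hp₂ : p ≠ (b, a) := fun h => hp' (by simp [h])
  unfold pairProj
  split_ifs with h h'
  · exact projOnto_apply_eq_zero (by simp [pairVec, ketPair, hp.symm, hp₂]) q
  · obtain ⟨rfl, -⟩ : a = b ∧ a ≠ 0 := h'
    exact projOnto_apply_eq_zero (by simp [ketPair, hp.symm]) q
  · rfl

lemma hloc_apply_eq_sum (ℓ : Fin n → ℝ) (p q : Fin (n + 1) × Fin (n + 1)) :
    hloc ℓ p q = ∑ x : Fin (n + 1) × Fin (n + 1), pairProj (nu ℓ) x.1 x.2 p q := by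
  simp only [hloc_eq_sum_pairProj, Matrix.sum_apply]
  exact (Fintype.sum_prod_type' _).symm

lemma hloc_apply_of_ne (ℓ : Fin n → ℝ) {a b : Fin (n + 1)} (hab : a ≠ b)
    (q : Fin (n + 1) × Fin (n + 1)) :
    hloc ℓ (a, b) q = projOnto (pairVec (nu ℓ) a b) (a, b) q := by
  have hne : (a, b) ≠ (b, a) := by simp [hab]
  rw [hloc_apply_eq_sum, Fintype.sum_eq_add (a, b) (b, a) hne fun x hx =>
    pairProj_apply_eq_zero hx.1 hx.2 q]
  rcases hab.lt_or_gt with h | h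
  · simp [pairProj, h, h.ne', not_lt.2 h.le]
  · simp [pairProj, h, hab, not_lt.2 h.le]
    rw [pairVec_swap, projOnto_neg]

lemma hloc_apply_same (ℓ : Fin n → ℝ) (a : Fin (n + 1)) (q : Fin (n + 1) × Fin (n + 1)) :
    hloc ℓ (a, a) q = if a = 0 then 0 else if q = (a, a) then 1 else 0 := by
  rw [hloc_apply_eq_sum, Fintype.sum_eq_single (a, a) fun x hx => pairProj_apply_eq_zero hx hx q]
  by_cases ha : a = 0 <;> simp [pairProj, ha, projOnto_apply, ketPair]

lemma projOnto_pairVec_apply {a b : Fin (n + 1)} (hab : a ≠ b) (q : Fin (n + 1) × Fin (n + 1)) :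
    projOnto (pairVec ν a b) (a, b) q =
      if q = (a, b) then ((ν a ^ 2 / (ν a ^ 2 + ν b ^ 2) : ℝ) : ℂ)
      else if q = (b, a) then -((ν a * ν b / (ν a ^ 2 + ν b ^ 2) : ℝ) : ℂ) else 0 := by
  have hne : (a, b) ≠ (b, a) := by simp [hab]
  have hnorm : ∑ r, Complex.normSq (pairVec ν a b r) = ν a ^ 2 + ν b ^ 2 := by
    rw [Fintype.sum_eq_add (a, b) (b, a) hne fun r hr => by simp [pairVec, ketPair, hr.1, hr.2]]
    simp [pairVec, ketPair, hne, hne.symm, Complex.normSq_ofReal, sq]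
  rw [projOnto_apply, hnorm]
  split_ifs with h1 h2
  · subst h1; simp [pairVec, ketPair, hab]; ring
  · subst h2; simp [pairVec, ketPair, hne, hne.symm]; ring
  · simp [pairVec, ketPair, h1, h2]

noncomputable def hlocDiag (ν : Fin (n + 1) → ℝ) (a b : Fin (n + 1)) : ℝ :=
  if a = b then (if a = 0 then 0 else 1) else ν a ^ 2 / (ν a ^ 2 + ν b ^ 2)

noncomputable def hlocHop (ν : Fin (n + 1) → ℝ) (a b : Fin (n + 1)) : ℝ :=
  if a = b then 0 else ν a * ν b / (ν a ^ 2 + ν b ^ 2)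

noncomputable def hlocMargin (ν : Fin (n + 1) → ℝ) (a b : Fin (n + 1)) : ℝ :=
  hlocDiag ν a b - hlocHop ν a b

lemma hloc_apply (ℓ : Fin n → ℝ) (a b : Fin (n + 1)) (q : Fin (n + 1) × Fin (n + 1)) :
    hloc ℓ (a, b) q =
      if q = (a, b) then (hlocDiag (nu ℓ) a b : ℂ)
      else if q = (b, a) then -(hlocHop (nu ℓ) a b : ℂ) else 0 := by
  rcases eq_or_ne a b with rfl | hab
  · rw [hloc_apply_same]
    by_cases hq : q = (a, a) <;> simp [hlocDiag, hq, apply_ite Complex.ofReal]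
  · rw [hloc_apply_of_ne ℓ hab, projOnto_pairVec_apply hab]
    simp [hlocDiag, hlocHop, hab]

lemma hloc_apply_diag (ℓ : Fin n → ℝ) (a b : Fin (n + 1)) :
    hloc ℓ (a, b) (a, b) = hlocDiag (nu ℓ) a b := by
  simp [hloc_apply]

lemma sum_norm_hloc_apply_erase (ℓ : Fin n → ℝ) (a b : Fin (n + 1)) :
    ∑ q ∈ Finset.univ.erase (a, b), ‖hloc ℓ (a, b) q‖ = |hlocHop (nu ℓ) a b| := by
  rcases eq_or_ne a b with rfl | hab
  · refine (Finset.sum_eq_zero fun q hq => ?_).trans (by simp [hlocHop])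
    simp [hloc_apply, Finset.ne_of_mem_erase hq]
  · have hmem : (b, a) ∈ Finset.univ.erase (a, b) := by simp [hab.symm]
    rw [Finset.sum_eq_single_of_mem _ hmem fun q hq hqba => by
      simp [hloc_apply, Finset.ne_of_mem_erase hq, hqba]]
    simp [hloc_apply, hab.symm, Complex.norm_real]

lemma hloc_apply_same_right (ℓ : Fin n → ℝ) {s : Fin (n + 1)} (hs : s ≠ 0)
    (q : Fin (n + 1) × Fin (n + 1)) :
    hloc ℓ q (s, s) = if q = (s, s) then 1 else 0 := by
  obtain ⟨a, b⟩ := q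
  rw [hloc_apply]
  by_cases h : a = s ∧ b = s
  · obtain ⟨rfl, rfl⟩ := h
    simp [hlocDiag, hs]
  · grind

end LocalInteraction

section Embed

variable {V : Type*} {n : ℕ} {x y : V} {σ τ : V → Fin (n + 1)}

lemma eq_of_forall_ne_ne (h : ∀ z, z ≠ x → z ≠ y → σ z = τ z) (hx : σ x = τ x)
    (hy : σ y = τ y) : σ = τ := by
  funext z
  by_cases hzx : z = x
  · exact hzx ▸ hx
  by_cases hzy : z = y
  · exact hzy ▸ hy
  exact h z hzx hzy

variable [Fintype V] [DecidableEq V]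
  (h2 : Matrix (Fin (n + 1) × Fin (n + 1)) (Fin (n + 1) × Fin (n + 1)) ℂ)

lemma embed_apply_self : embed x y h2 σ σ = h2 (σ x, σ y) (σ x, σ y) := by
  simp [embed]

lemma sum_norm_embed_apply_erase_le :
    ∑ τ ∈ Finset.univ.erase σ, ‖embed x y h2 σ τ‖ ≤
      ∑ q ∈ Finset.univ.erase (σ x, σ y), ‖h2 (σ x, σ y) q‖ := by
  set S := (Finset.univ.erase σ).filter fun τ => ∀ z, z ≠ x → z ≠ y → σ z = τ z
  have hS : ∑ τ ∈ Finset.univ.erase σ, ‖embed x y h2 σ τ‖ =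
      ∑ τ ∈ S, ‖h2 (σ x, σ y) (τ x, τ y)‖ := by
    rw [Finset.sum_filter]
    exact Finset.sum_congr rfl fun τ _ => by simp only [embed, Matrix.of_apply]; split_ifs <;> simp
  have hinj : Set.InjOn (fun τ : V → Fin (n + 1) => (τ x, τ y)) S := by
    intro τ hτ τ' hτ' heq
    simp only [S, Finset.coe_filter, Set.mem_ofPred_eq] at hτ hτ'
    exact eq_of_forall_ne_ne (fun z hzx hzy => (hτ.2 z hzx hzy).symm.trans (hτ'.2 z hzx hzy))
      (congrArg Prod.fst heq) (congrArg Prod.snd heq)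
  have hsub : S.image (fun τ => (τ x, τ y)) ⊆ Finset.univ.erase (σ x, σ y) := by
    simp only [Finset.subset_iff, Finset.mem_image, Finset.mem_erase, Finset.mem_univ, and_true]
    rintro _ ⟨τ, hτ, rfl⟩ hq
    simp only [S, Finset.mem_filter, Finset.mem_erase] at hτ
    exact hτ.1.1
      (eq_of_forall_ne_ne hτ.2 (congrArg Prod.fst hq).symm (congrArg Prod.snd hq).symm).symm
  rw [hS, ← Finset.sum_image (f := fun q => ‖h2 (σ x, σ y) q‖) hinj]
  exact Finset.sum_le_sum_of_subset_of_nonneg hsub fun _ _ _ => norm_nonneg _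

lemma embed_apply_of_apply_eq_single
    (hcol : ∀ q, h2 q (σ x, σ y) = if q = (σ x, σ y) then 1 else 0) (τ : V → Fin (n + 1)) :
    embed x y h2 τ σ = if τ = σ then 1 else 0 := by
  simp only [embed, Matrix.of_apply, hcol]
  by_cases hτ : τ = σ
  · simp [hτ]
  · simp only [hτ, if_false, ite_eq_right_iff, one_ne_zero, imp_false]
    intro h hq
    exact hτ (eq_of_forall_ne_ne h (congrArg Prod.fst hq) (congrArg Prod.snd hq))

end Embed

structure IsGeomDecreasing {n : ℕ} (ε : ℝ) (ν : Fin (n + 1) → ℝ) : Prop where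
  pos : ∀ a, 0 < ν a
  le_mul_of_lt : ∀ {a b}, a < b → ν b ≤ ε * ν a

lemma isGeomDecreasing_nu {n : ℕ} {δ : ℝ} (hδ0 : 0 < δ) (hδ1 : δ ≤ 1) {ℓ : Fin n → ℝ}
    (hℓ : ∀ i : Fin n, 1 / 2 * δ ^ ((i : ℕ) + 1) ≤ ℓ i ∧ ℓ i ≤ 2 * δ ^ ((i : ℕ) + 1)) :
    IsGeomDecreasing (4 * δ) (nu ℓ) := by
  have hbound (a : Fin (n + 1)) : δ ^ (a : ℕ) / 2 ≤ nu ℓ a ∧ nu ℓ a ≤ 2 * δ ^ (a : ℕ) := by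
    induction a using Fin.cases with
    | zero => norm_num [nu]
    | succ i => simpa [nu, div_eq_inv_mul, mul_comm] using hℓ i
  refine ⟨fun a => (by positivity : 0 < δ ^ (a : ℕ) / 2).trans_le (hbound a).1, ?_⟩
  intro a b hab
  have hpow : δ ^ (b : ℕ) ≤ δ ^ ((a : ℕ) + 1) := pow_le_pow_of_le_one hδ0.le hδ1 hab
  nlinarith [(hbound a).1, (hbound b).2, pow_succ δ (a : ℕ), pow_pos hδ0 (a : ℕ)]

namespace IsGeomDecreasing

variable {n : ℕ} {ε : ℝ} {ν : Fin (n + 1) → ℝ}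

lemma hlocHop_nonneg (hν : IsGeomDecreasing ε ν) (a b : Fin (n + 1)) : 0 ≤ hlocHop ν a b := by
  unfold hlocHop
  split_ifs
  · rfl
  · have := hν.pos a; have := hν.pos b; positivity

lemma hlocHop_le (hν : IsGeomDecreasing ε ν) (hε : 0 ≤ ε) (a b : Fin (n + 1)) :
    hlocHop ν a b ≤ ε := by
  unfold hlocHop
  split_ifs with hab
  · exact hε
  have ha := hν.pos a
  have hb := hν.pos b
  rw [div_le_iff₀ (by positivity)]
  rcases lt_or_gt_of_ne hab with h | h <;> nlinarith [hν.le_mul_of_lt h]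

lemma half_sub_le_hlocMargin (hν : IsGeomDecreasing ε ν) (hε : ε ≤ 1) {a b : Fin (n + 1)}
    (hab : a < b) : (1 - ε) / 2 ≤ hlocMargin ν a b := by
  have ha := hν.pos a
  have hb := hν.pos b
  have hba := hν.le_mul_of_lt hab
  rw [hlocMargin, hlocDiag, hlocHop, if_neg hab.ne, if_neg hab.ne, div_sub_div_same,
    le_div_iff₀ (by positivity)]
  have hε0 : 0 ≤ 1 - ε := by linarith
  have hsq : ν b ^ 2 ≤ ν a ^ 2 := pow_le_pow_left₀ hb.le (by nlinarith) 2
  nlinarith [mul_le_mul_of_nonneg_left hba ha.le, mul_le_mul_of_nonneg_left hsq hε0]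

lemma mul_sub_add_quarter_le_hlocMargin (hν : IsGeomDecreasing ε ν) (hε0 : 0 ≤ ε)
    (hε : 4 * (n + 1) * ε ≤ 1) {a b : Fin (n + 1)} (hab : a ≤ b) (hb : b ≠ 0) :
    ε * ((b : ℕ) - (a : ℕ) : ℝ) + 1 / 4 ≤ hlocMargin ν a b := by
  rcases hab.eq_or_lt with rfl | hab
  · norm_num [hlocMargin, hlocDiag, hlocHop, hb]
  have hbn : ((b : ℕ) : ℝ) ≤ n := by exact_mod_cast Fin.is_le b
  have := hν.half_sub_le_hlocMargin (by nlinarith) hab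
  nlinarith [(Nat.cast_nonneg (a : ℕ) : (0 : ℝ) ≤ (a : ℕ))]

lemma mul_sub_le_hlocMargin (hν : IsGeomDecreasing ε ν) (hε0 : 0 ≤ ε)
    (hε : 4 * (n + 1) * ε ≤ 1) (a b : Fin (n + 1)) :
    ε * ((b : ℕ) - (a : ℕ) : ℝ) ≤ hlocMargin ν a b := by
  rcases le_or_gt a b with hab | hba
  · rcases eq_or_ne b 0 with rfl | hb
    · obtain rfl := Fin.le_zero_iff.mp hab
      simp [hlocMargin, hlocDiag, hlocHop]
    · linarith [hν.mul_sub_add_quarter_le_hlocMargin hε0 hε hab hb]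
  · have hdiag : 0 ≤ hlocDiag ν a b := by
      unfold hlocDiag
      split_ifs <;> positivity
    have : ((b : ℕ) : ℝ) + 1 ≤ (a : ℕ) := by exact_mod_cast hba
    rw [hlocMargin]
    nlinarith [hν.hlocHop_le hε0 a b]

end IsGeomDecreasing

section Torus

variable {n d N : ℕ}

lemma nbrT_eq_add (x : Fin d → ZMod N) (k : Fin d) : nbrT x k = x + Pi.single k 1 := by
  funext j
  by_cases hj : j = k <;> simp [nbrT, hj]

variable [NeZero N]

lemma sum_edges_sub_eq_zero (f : (Fin d → ZMod N) → ℝ) :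
    ∑ e : (Fin d → ZMod N) × Fin d, (f (nbrT e.1 e.2) - f e.1) = 0 := by
  rw [Fintype.sum_prod_type_right]
  refine Finset.sum_eq_zero fun k _ => ?_
  simp only [nbrT_eq_add, Finset.sum_sub_distrib, sub_eq_zero]
  exact Fintype.sum_equiv (Equiv.addRight _) _ _ fun _ => rfl

lemma quarter_le_sum_hlocMargin {ε : ℝ} {ν : Fin d → Fin (n + 1) → ℝ}
    (hν : ∀ k, IsGeomDecreasing ε (ν k)) (hε0 : 0 ≤ ε) (hε : 4 * (n + 1) * ε ≤ 1) (hd : 0 < d)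
    {σ : (Fin d → ZMod N) → Fin (n + 1)} (hσ : σ ≠ 0) :
    1 / 4 ≤ ∑ e : (Fin d → ZMod N) × Fin d, hlocMargin (ν e.2) (σ e.1) (σ (nbrT e.1 e.2)) := by
  set F : (Fin d → ZMod N) × Fin d → ℝ := fun e => hlocMargin (ν e.2) (σ e.1) (σ (nbrT e.1 e.2)) -
    ε * (((σ (nbrT e.1 e.2) : ℕ) : ℝ) - ((σ e.1 : ℕ) : ℝ))
  have hF : ∑ e, F e =
      ∑ e : (Fin d → ZMod N) × Fin d, hlocMargin (ν e.2) (σ e.1) (σ (nbrT e.1 e.2)) := by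
    rw [Finset.sum_sub_distrib, ← Finset.mul_sum,
      sum_edges_sub_eq_zero fun x => ((σ x : ℕ) : ℝ), mul_zero, sub_zero]
  obtain ⟨xs, -, hxs⟩ := Finset.exists_max_image Finset.univ σ Finset.univ_nonempty
  have hmax : σ xs ≠ 0 := fun h =>
    hσ (funext fun x => Fin.le_zero_iff.mp (h ▸ hxs x (Finset.mem_univ _)))
  set k : Fin d := ⟨0, hd⟩
  set z := xs - Pi.single k 1
  have hz : nbrT z k = xs := by rw [nbrT_eq_add, sub_add_cancel]
  have hkey : 1 / 4 ≤ F (z, k) := by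
    simp only [F, hz]
    linarith [(hν k).mul_sub_add_quarter_le_hlocMargin hε0 hε (hxs z (Finset.mem_univ _)) hmax]
  rw [← hF]
  exact hkey.trans (Finset.single_le_sum
    (fun e _ => sub_nonneg.2 ((hν e.2).mul_sub_le_hlocMargin hε0 hε _ _)) (Finset.mem_univ _))

variable (lam : Fin n → Fin d → ℝ)

lemma HL_apply_self (σ : (Fin d → ZMod N) → Fin (n + 1)) :
    HL n d N lam σ σ =
      ((∑ e : (Fin d → ZMod N) × Fin d,
        hlocDiag (nu fun i => lam i e.2) (σ e.1) (σ (nbrT e.1 e.2)) : ℝ) : ℂ) := by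
  simp [HL, hedge, Matrix.sum_apply, embed_apply_self, hloc_apply_diag]

lemma sum_norm_HL_apply_erase_le (σ : (Fin d → ZMod N) → Fin (n + 1)) :
    ∑ τ ∈ Finset.univ.erase σ, ‖HL n d N lam σ τ‖ ≤
      ∑ e : (Fin d → ZMod N) × Fin d,
        |hlocHop (nu fun i => lam i e.2) (σ e.1) (σ (nbrT e.1 e.2))| :=
  calc ∑ τ ∈ Finset.univ.erase σ, ‖HL n d N lam σ τ‖
      ≤ ∑ τ ∈ Finset.univ.erase σ, ∑ e, ‖hedge lam e σ τ‖ :=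
        Finset.sum_le_sum fun τ _ => by
          simpa only [HL, Matrix.sum_apply] using norm_sum_le _ _
    _ = ∑ e, ∑ τ ∈ Finset.univ.erase σ, ‖hedge lam e σ τ‖ := Finset.sum_comm
    _ ≤ _ := Finset.sum_le_sum fun e _ =>
        (sum_norm_embed_apply_erase_le _).trans_eq (sum_norm_hloc_apply_erase _ _ _)

lemma HL_mulVec_single_const {s : Fin (n + 1)} (hs : s ≠ 0) :
    HL n d N lam *ᵥ Pi.single (fun _ => s) 1 =
      (Fintype.card ((Fin d → ZMod N) × Fin d) : ℂ) • Pi.single (fun _ => s) 1 := by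
  funext τ
  have hedge_col (e : (Fin d → ZMod N) × Fin d) :
      hedge lam e τ (fun _ => s) = if τ = fun _ => s then 1 else 0 :=
    embed_apply_of_apply_eq_single (σ := fun _ => s) _ (hloc_apply_same_right _ hs) τ
  simp [HL, Matrix.sum_apply, hedge_col, Pi.single_apply]

lemma card_mem_spectrum_HL (hn : 0 < n) :
    ((Fintype.card ((Fin d → ZMod N) × Fin d) : ℝ) : ℂ) ∈ spectrum ℂ (HL n d N lam) := by
  rw [Complex.ofReal_natCast]
  exact Matrix.mem_spectrum_of_mulVec_eq_smul (Pi.single_ne_zero_iff.2 one_ne_zero)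
    (HL_mulVec_single_const lam (Fin.succ_ne_zero ⟨0, hn⟩))

lemma quarter_le_of_mem_spectrum_HL {ε : ℝ} (hν : ∀ k, IsGeomDecreasing ε (nu fun i => lam i k))
    (hε0 : 0 ≤ ε) (hε : 4 * (n + 1) * ε ≤ 1) (hd : 0 < d) {γ : ℝ} (hγ0 : 0 < γ)
    (hγ : (γ : ℂ) ∈ spectrum ℂ (HL n d N lam)) : 1 / 4 ≤ γ := by
  obtain ⟨σ, hσ⟩ := Matrix.exists_norm_sub_diag_le_of_mem_spectrum hγ
  have hball := hσ.trans (sum_norm_HL_apply_erase_le lam σ)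
  simp only [HL_apply_self, ← Complex.ofReal_sub, Complex.norm_real, Real.norm_eq_abs,
    abs_of_nonneg ((hν _).hlocHop_nonneg _ _)] at hball
  rcases eq_or_ne σ 0 with rfl | hσ0
  · simp [hlocDiag, hlocHop] at hball
    linarith
  · have := quarter_le_sum_hlocMargin hν hε0 hε hd hσ0
    simp only [hlocMargin, Finset.sum_sub_distrib] at this
    linarith [neg_abs_le (γ - ∑ e : (Fin d → ZMod N) × Fin d,
      hlocDiag (nu fun i => lam i e.2) (σ e.1) (σ (nbrT e.1 e.2)))]

end Torus

/-- **Theorem (Spectral gap).** Fix integers `d ≥ 2` and `n ≥ 1`. There exists a constant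
`c_{d,n} > 0` such that for all `0 < δ < c_{d,n}`: if the anisotropy parameters satisfy
`(1/2)δ^i ≤ λ_i^{(k)} ≤ 2δ^i` for all `1 ≤ i ≤ n`, `1 ≤ k ≤ d`, then `H_L` is gapped,
i.e. `inf_{L ≥ 2} γ_L > 0`. -/
theorem pvbs_spectral_gap (d n : ℕ) (hd : 2 ≤ d) (hn : 1 ≤ n) :
    ∃ c : ℝ, 0 < c ∧
      ∀ δ : ℝ, 0 < δ → δ < c →
        ∀ lam : Fin n → Fin d → ℝ,
          (∀ (i : Fin n) (k : Fin d),
              1 / 2 * δ ^ ((i : ℕ) + 1) ≤ lam i k ∧ lam i k ≤ 2 * δ ^ ((i : ℕ) + 1)) →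
          ∃ g : ℝ, 0 < g ∧
            ∀ (L : ℕ) [NeZero (2 * L)], 2 ≤ L → g ≤ gap (HL n d (2 * L) lam) := by
  refine ⟨1 / (16 * (n + 1)), by positivity, fun δ hδ0 hδc lam hlam =>
    ⟨1 / 4, by norm_num, fun L _ _ => ?_⟩⟩
  have hδε : 4 * (n + 1) * (4 * δ) ≤ 1 := by
    rw [lt_div_iff₀ (by positivity)] at hδc
    linarith
  have hδ1 : δ ≤ 1 := by nlinarith
  have hν (k : Fin d) := isGeomDecreasing_nu hδ0 hδ1 fun i => hlam i k
  have : Nonempty (Fin d) := ⟨⟨0, by omega⟩⟩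
  refine le_csInf ⟨_, Nat.cast_pos.2 Fintype.card_pos, card_mem_spectrum_HL lam (by omega)⟩ ?_
  rintro γ ⟨hγ0, hγ⟩
  exact quarter_le_of_mem_spectrum_HL lam hν (by positivity) hδε (by omega) hγ0 hγ

end PVBS
end

section
/- (Ground states of the reference box-on-a-stick Hamiltonian.) Let b = |i_0 ⊗ i_1 ⊗ … ⊗ i_n ⊗ j⟩ be a product basis vector of ⊗_{x∈C_m} ℂ^{n+1}, where i_l ∈ {0,…,n} is the label at site l·e_1 along the stick and j ∈ {0,…,n}^{|B_m|−1} records the labels at the remaining sites of the box B_m. Then b ∈ ker H̃_{C_m} if and only if j is identically 0 and the sequence (i_0, i_1, …, i_n) is strictly decreasing until it reaches 0 and remains 0 thereafter. -/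
open scoped BigOperators ComplexOrder Matrix

namespace PVBS

/-! In the product basis `h̃` is diagonal: it gives `|a ⊗ b⟩` energy `1` if `b ≠ 0` and `a ≤ b`,
and `0` otherwise. So a basis vector is a ground state iff along every edge the label either
drops to `0` or strictly decreases. Every site `z` of `C_m` is reached from the origin by a
monotone lattice path of length `∑ j, z j` inside `C_m`, so a nonzero label at `z` forces
`σ z + ∑ j, z j ≤ n`. Box sites have `∑ j, z j ≥ n` and hence label `0`; the only remaining
edges are those of the stick, where the condition is the stated one. -/

section LocalInteraction

lemma projOnto_ketPair {n : ℕ} (a b : Fin (n + 1)) (p q : Fin (n + 1) × Fin (n + 1)) :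
    projOnto (ketPair a b) p q = if p = (a, b) ∧ q = (a, b) then 1 else 0 := by
  have hnorm : ∑ r, Complex.normSq (ketPair a b r) = 1 := by
    simp [ketPair, apply_ite Complex.normSq]
  rw [projOnto, hnorm]
  simp only [Complex.ofReal_one, inv_one, one_smul, Matrix.of_apply, ketPair]
  split_ifs <;> simp_all

lemma htilde_apply_of_ne {n : ℕ} {p q : Fin (n + 1) × Fin (n + 1)} (h : p ≠ q) :
    htilde n p q = 0 := by
  have hpq : ∀ a b : Fin (n + 1), ¬ (p = (a, b) ∧ q = (a, b)) := by
    rintro a b ⟨rfl, rfl⟩; exact h rfl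
  simp [htilde, Matrix.sum_apply, projOnto_ketPair, hpq,
    apply_ite (fun M : Matrix (Fin (n + 1) × Fin (n + 1)) (Fin (n + 1) × Fin (n + 1)) ℂ => M p q)]

lemma htilde_apply_self {n : ℕ} (a b : Fin (n + 1)) :
    htilde n (a, b) (a, b) = if b ≠ 0 ∧ a ≤ b then 1 else 0 := by
  simp only [htilde, Matrix.sum_apply, Matrix.add_apply, projOnto_ketPair, and_self,
    apply_ite (fun M : Matrix (Fin (n + 1) × Fin (n + 1)) (Fin (n + 1) × Fin (n + 1)) ℂ =>
      M (a, b) (a, b)), Matrix.zero_apply, Prod.mk.injEq]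
  cases a using Fin.cases <;> cases b using Fin.cases
  case succ.succ i j =>
    simp only [Fin.succ_ne_zero, false_and, if_false, Finset.sum_const_zero, zero_add,
      Fin.succ_inj, Fin.succ_le_succ_iff, ne_eq, not_false_eq_true, true_and]
    rw [Finset.sum_eq_single i (fun x _ hx => Finset.sum_eq_zero fun y _ => by simp [Ne.symm hx])
      (by simp), Finset.sum_eq_single j (fun y _ hy => by simp [Ne.symm hy]) (by simp)]
    simp
  all_goals simp [Fin.succ_ne_zero, (Fin.succ_ne_zero _).symm, Fin.succ_inj]

end LocalInteraction

section Kernel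

variable {d n : ℕ}

lemma eq_zero_or_lt_iff_val_lt_or_both_zero {a b : Fin (n + 1)} :
    b = 0 ∨ b < a ↔ (b : ℕ) < a ∨ (a = 0 ∧ b = 0) := by
  simp only [Fin.ext_iff, Fin.lt_def, Fin.val_zero]
  omega

lemma bvec_ne_zero {I : Type*} [DecidableEq I] (σ : I) : bvec σ ≠ 0 :=
  fun h => by simpa [bvec] using congrFun h σ

lemma embed_mulVec_bvec {V : Type*} [Fintype V] [DecidableEq V] (x y : V)
    {h2 : Matrix (Fin (n + 1) × Fin (n + 1)) (Fin (n + 1) × Fin (n + 1)) ℂ}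
    (hdiag : ∀ p q, p ≠ q → h2 p q = 0) (σ : V → Fin (n + 1)) :
    embed x y h2 *ᵥ bvec σ = h2 (σ x, σ y) (σ x, σ y) • bvec σ := by
  funext τ
  simp only [Matrix.mulVec, dotProduct, bvec, mul_ite, mul_one, mul_zero,
    Finset.sum_ite_eq', Finset.mem_univ, if_true, Pi.smul_apply, smul_eq_mul]
  by_cases hτ : τ = σ
  · simp [hτ, embed]
  · rw [if_neg hτ, embed, Matrix.of_apply]
    split_ifs with hagree
    · refine hdiag _ _ fun hxy => hτ (funext fun z => ?_)
      by_cases hzx : z = x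
      · exact hzx ▸ (Prod.ext_iff.mp hxy).1
      by_cases hzy : z = y
      · exact hzy ▸ (Prod.ext_iff.mp hxy).2
      exact hagree z hzx hzy
    · rfl

/-- The number of edges `(x, x + e_k)` of `G` on which `h̃` does not annihilate the basis
vector labelled by `σ`. -/
def frustration (G : Finset (Fin d → ℤ)) (σ : {x // x ∈ G} → Fin (n + 1)) : ℕ :=
  ∑ x : {x // x ∈ G}, ∑ k : Fin d,
    if h : nbrZ (x : Fin d → ℤ) k ∈ G then
      if σ ⟨nbrZ x k, h⟩ ≠ 0 ∧ σ x ≤ σ ⟨nbrZ x k, h⟩ then 1 else 0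
    else 0

lemma HtildeG_mulVec_bvec (G : Finset (Fin d → ℤ)) (σ : {x // x ∈ G} → Fin (n + 1)) :
    HtildeG n G *ᵥ bvec σ = (frustration G σ : ℂ) • bvec σ := by
  simp only [HtildeG, frustration, Matrix.sum_mulVec, Nat.cast_sum, Finset.sum_smul]
  refine Finset.sum_congr rfl fun x _ => Finset.sum_congr rfl fun k _ => ?_
  by_cases h : nbrZ (x : Fin d → ℤ) k ∈ G
  · rw [dif_pos h, dif_pos h, embed_mulVec_bvec _ _ (fun _ _ => htilde_apply_of_ne),
      htilde_apply_self]
    split_ifs <;> simp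
  · simp [h]

def DecreasesAlongEdges (G : Finset (Fin d → ℤ)) (σ : {x // x ∈ G} → Fin (n + 1)) : Prop :=
  ∀ (x : {x // x ∈ G}) (k : Fin d) (h : nbrZ (x : Fin d → ℤ) k ∈ G),
    σ ⟨nbrZ x k, h⟩ = 0 ∨ σ ⟨nbrZ x k, h⟩ < σ x

lemma frustration_eq_zero_iff {G : Finset (Fin d → ℤ)} {σ : {x // x ∈ G} → Fin (n + 1)} :
    frustration G σ = 0 ↔ DecreasesAlongEdges G σ := by
  simp only [frustration, DecreasesAlongEdges, Finset.sum_eq_zero_iff, Finset.mem_univ,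
    true_implies]
  refine forall_congr' fun x => forall_congr' fun k => ?_
  by_cases h : nbrZ (x : Fin d → ℤ) k ∈ G
  · rw [dif_pos h, forall_prop_of_true h]
    simp only [ite_eq_right_iff, one_ne_zero, imp_false, not_and_or, not_not, not_le]
  · simp [h]

lemma HtildeG_mulVec_bvec_eq_zero_iff {G : Finset (Fin d → ℤ)}
    {σ : {x // x ∈ G} → Fin (n + 1)} :
    HtildeG n G *ᵥ bvec σ = 0 ↔ DecreasesAlongEdges G σ := by
  rw [HtildeG_mulVec_bvec, smul_eq_zero, or_iff_left (bvec_ne_zero σ), Nat.cast_eq_zero,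
    frustration_eq_zero_iff]

end Kernel

section Lattice

variable {d : ℕ}

lemma nbrZ_eq_add_single (x : Fin d → ℤ) (k : Fin d) : nbrZ x k = x + Pi.single k 1 := by
  funext j
  by_cases hj : j = k <;> simp [nbrZ, hj]

lemma sum_nbrZ (x : Fin d → ℤ) (k : Fin d) : ∑ j, nbrZ x k j = ∑ j, x j + 1 := by
  simp [nbrZ_eq_add_single, Finset.sum_add_distrib]

lemma stickPt_zero : stickPt d 0 = 0 := by
  funext k; simp [stickPt]

lemma stickPt_succ_eq_single (l : ℕ) : stickPt (d + 1) l = Pi.single 0 (l : ℤ) := by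
  funext k
  by_cases hk : k = 0 <;> simp [stickPt, hk]

lemma sum_stickPt (l : ℕ) : ∑ j, stickPt (d + 1) l j = l := by
  simp [stickPt_succ_eq_single]

lemma nbrZ_stickPt (l : ℕ) : nbrZ (stickPt (d + 1) l) 0 = stickPt (d + 1) (l + 1) := by
  simp [nbrZ_eq_add_single, stickPt_succ_eq_single, ← Pi.single_add]

end Lattice

section Descent

variable {d n : ℕ} {G : Finset (Fin d → ℤ)} {σ : {x // x ∈ G} → Fin (n + 1)}

/-- A nonzero label at `z` has dropped by at least one along each of the `∑ j, z j` edges of a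
monotone lattice path from the origin to `z` inside `G`. -/
lemma DecreasesAlongEdges.val_add_sum_le (hσ : DecreasesAlongEdges G σ)
    (hG : ∀ z ∈ G, z ≠ 0 → ∃ x ∈ G, ∃ k, nbrZ x k = z) (z : {x // x ∈ G}) (hz : σ z ≠ 0) :
    ((σ z : ℕ) : ℤ) + ∑ j, (z : Fin d → ℤ) j ≤ n := by
  suffices key : ∀ t : ℕ, ∀ z : {x // x ∈ G}, ∑ j, (z : Fin d → ℤ) j = t → σ z ≠ 0 →
      ((σ z : ℕ) : ℤ) + t ≤ n by
    have hle : (σ z : ℕ) ≤ n := Fin.is_le _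
    rcases le_or_gt 0 (∑ j, (z : Fin d → ℤ) j) with hpos | hneg
    · have := key _ z (Int.toNat_of_nonneg hpos).symm hz
      omega
    · omega
  intro t
  induction t with
  | zero => intro z _ _; simpa using Fin.is_le (σ z)
  | succ t ih =>
    rintro ⟨z, hzG⟩ hsum hz
    have hz0 : z ≠ 0 := by
      rintro rfl
      simp only [Pi.zero_apply, Finset.sum_const_zero] at hsum
      omega
    obtain ⟨x, hx, k, rfl⟩ := hG z hzG hz0
    have hx_sum : ∑ j, x j = t := by rw [sum_nbrZ] at hsum; push_cast at hsum; omega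
    have hlt : σ ⟨nbrZ x k, hzG⟩ < σ ⟨x, hx⟩ := (hσ ⟨x, hx⟩ k hzG).resolve_left hz
    have := ih ⟨x, hx⟩ hx_sum (Fin.ne_zero_of_lt hlt)
    rw [Fin.lt_def] at hlt
    push_cast
    omega

end Descent

section BoxOnStick

variable {d n m : ℕ}

lemma mem_boxF {z : Fin d → ℤ} :
    z ∈ boxF d n m ↔ stickPt d n ≤ z ∧ z ≤ stickPt d n + fun _ => (m : ℤ) := by
  simp only [boxF, Finset.mem_image, Finset.mem_univ, true_and, Pi.le_def, Pi.add_apply,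
    ← forall_and]
  constructor
  · rintro ⟨a, rfl⟩ k
    have := (a k).is_le
    simp only [stickPt]
    split_ifs <;> omega
  · intro hz
    refine ⟨fun k => ⟨(z k - stickPt d n k).toNat, by have := hz k; omega⟩, funext fun k => ?_⟩
    have := hz k
    simp only [stickPt] at this ⊢
    split_ifs at this ⊢ <;> omega

lemma nonneg_of_mem_CmF {z : Fin d → ℤ} (hz : z ∈ CmF d n m) : 0 ≤ z := by
  rcases Finset.mem_union.mp hz with hz | hz
  · obtain ⟨l, -, rfl⟩ := Finset.mem_image.mp hz
    intro k
    simp only [stickPt]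
    split_ifs <;> simp
  · refine le_trans (fun k => ?_) (mem_boxF.mp hz).1
    simp only [stickPt]
    split_ifs <;> simp

lemma stickPt_mem_CmF {l : ℕ} (hl : l ≤ n) : stickPt d l ∈ CmF d n m := by
  rcases hl.lt_or_eq with hl | rfl
  · exact Finset.mem_union_left _ (Finset.mem_image_of_mem _ (Finset.mem_range.mpr hl))
  · refine Finset.mem_union_right _ (mem_boxF.mpr ⟨le_rfl, fun k => ?_⟩)
    simp

lemma le_sum_of_mem_boxF {z : Fin (d + 1) → ℤ} (hz : z ∈ boxF (d + 1) n m) :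
    (n : ℤ) ≤ ∑ j, z j := by
  rw [← sum_stickPt n]
  exact Finset.sum_le_sum fun j _ => (mem_boxF.mp hz).1 j

lemma exists_nbrZ_eq_of_mem_CmF {z : Fin (d + 1) → ℤ} (hz : z ∈ CmF (d + 1) n m)
    (hz0 : z ≠ 0) : ∃ x ∈ CmF (d + 1) n m, ∃ k, nbrZ x k = z := by
  have of_stick : ∀ l, l ≤ n → z = stickPt (d + 1) l →
      ∃ x ∈ CmF (d + 1) n m, ∃ k, nbrZ x k = z := by
    rintro (_ | l) hl rfl
    · exact absurd stickPt_zero hz0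
    · exact ⟨_, stickPt_mem_CmF (by omega : l ≤ n), 0, nbrZ_stickPt l⟩
  rcases Finset.mem_union.mp hz with hz | hz
  · obtain ⟨l, hl, rfl⟩ := Finset.mem_image.mp hz
    exact of_stick l (Finset.mem_range.mp hl).le rfl
  obtain ⟨hlow, hup⟩ := mem_boxF.mp hz
  rcases eq_or_ne (stickPt (d + 1) n) z with hcorner | hcorner
  · exact of_stick n le_rfl hcorner.symm
  obtain ⟨j, hj⟩ := (Pi.lt_def.mp (lt_of_le_of_ne hlow hcorner)).2
  have hpred_le : z - Pi.single j 1 ≤ z := sub_le_self _ (by simp [Pi.single_nonneg])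
  refine ⟨z - Pi.single j 1, Finset.mem_union_right _ (mem_boxF.mpr ⟨fun k => ?_,
    hpred_le.trans hup⟩), j, by simp [nbrZ_eq_add_single]⟩
  by_cases hk : k = j
  · subst hk
    simp only [Pi.sub_apply, Pi.single_eq_same]
    omega
  · simpa [hk] using hlow k

lemma exists_eq_stickPt_of_nbrZ_eq_stickPt {x : Fin (d + 1) → ℤ} (hx : 0 ≤ x) {k : Fin (d + 1)}
    {l : ℕ} (h : nbrZ x k = stickPt (d + 1) l) : ∃ l', l = l' + 1 ∧ x = stickPt (d + 1) l' := by
  rw [nbrZ_eq_add_single, stickPt_succ_eq_single] at h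
  have hk : k = 0 := by
    by_contra hk
    have := congrFun h k
    have hxk : 0 ≤ x k := hx k
    simp only [Pi.add_apply, Pi.single_eq_same, Pi.single_eq_of_ne hk] at this
    omega
  subst hk
  have h0 := congrFun h 0
  have hx0 : 0 ≤ x 0 := hx 0
  simp only [Pi.add_apply, Pi.single_eq_same] at h0
  refine ⟨l - 1, by omega, ?_⟩
  rw [stickPt_succ_eq_single, eq_sub_of_add_eq h, ← Pi.single_sub]
  congr 1
  omega

lemma mem_boxF_of_ne_stickPt {z : Fin d → ℤ} (hz : z ∈ CmF d n m)
    (hne : ∀ l ≤ n, z ≠ stickPt d l) : z ∈ boxF d n m := by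
  refine (Finset.mem_union.mp hz).resolve_left fun hstick => ?_
  obtain ⟨l, hl, hzl⟩ := Finset.mem_image.mp hstick
  exact hne l (Finset.mem_range.mp hl).le hzl.symm

lemma DecreasesAlongEdges.eq_zero_of_mem_boxF {σ : {x // x ∈ CmF (d + 1) n m} → Fin (n + 1)}
    (hσ : DecreasesAlongEdges (CmF (d + 1) n m) σ) {x : {x // x ∈ CmF (d + 1) n m}}
    (hx : (x : Fin (d + 1) → ℤ) ∈ boxF (d + 1) n m) : σ x = 0 := by
  by_contra hx0
  have hbound := hσ.val_add_sum_le (fun _ => exists_nbrZ_eq_of_mem_CmF) x hx0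
  have hsum := le_sum_of_mem_boxF hx
  have hpos := Fin.lt_def.mp (Fin.pos_iff_ne_zero.mpr hx0)
  simp only [Fin.val_zero] at hpos
  omega

end BoxOnStick

theorem ground_states_reference_box_on_stick_general (d n m : ℕ) (hd : 2 ≤ d)
    (σ : {x // x ∈ CmF d n m} → Fin (n + 1)) :
    (HtildeG n (CmF d n m)).mulVec (bvec σ) = 0 ↔
      ((∀ x : {x // x ∈ CmF d n m},
          (∀ l : ℕ, l ≤ n → (x : Fin d → ℤ) ≠ stickPt d l) → σ x = 0) ∧
        ∀ (l : ℕ), l < n → ∀ (x y : {x // x ∈ CmF d n m}),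
          (x : Fin d → ℤ) = stickPt d l → (y : Fin d → ℤ) = stickPt d (l + 1) →
            ((σ y : ℕ) < (σ x : ℕ) ∨ (σ x = 0 ∧ σ y = 0))) := by
  obtain ⟨d, rfl⟩ : ∃ d', d = d' + 1 := ⟨d - 1, by omega⟩
  rw [HtildeG_mulVec_bvec_eq_zero_iff]
  constructor
  · intro hσ
    refine ⟨fun x hx => hσ.eq_zero_of_mem_boxF (mem_boxF_of_ne_stickPt x.2 hx),
      fun l _ x y hx hy => ?_⟩
    have hxy : nbrZ (x : Fin (d + 1) → ℤ) 0 = y := by rw [hx, nbrZ_stickPt, hy]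
    have hmem : nbrZ (x : Fin (d + 1) → ℤ) 0 ∈ CmF (d + 1) n m := hxy ▸ y.2
    have hedge := hσ x 0 hmem
    rw [show (⟨_, hmem⟩ : {x // x ∈ CmF (d + 1) n m}) = y from Subtype.ext hxy] at hedge
    exact eq_zero_or_lt_iff_val_lt_or_both_zero.mp hedge
  · rintro ⟨hoff, hstick⟩ x k hy
    by_cases hon : ∃ l ≤ n, nbrZ (x : Fin (d + 1) → ℤ) k = stickPt (d + 1) l
    · obtain ⟨l, hl, hyl⟩ := hon
      obtain ⟨l, rfl, hxl⟩ := exists_eq_stickPt_of_nbrZ_eq_stickPt (nonneg_of_mem_CmF x.2) hyl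
      exact eq_zero_or_lt_iff_val_lt_or_both_zero.mpr (hstick l (by omega) x ⟨_, hy⟩ hxl hyl)
    · exact Or.inl (hoff _ fun l hl hyl => hon ⟨l, hl, hyl⟩)

/-- **Ground states of the reference box-on-a-stick Hamiltonian.** A product basis vector
`b` (labelled by a configuration `σ` of `C_m`) lies in `ker H̃_{C_m}` if and only if all
labels away from the stick `{0, e₁, …, n·e₁}` vanish and the sequence of labels
`(i_0, …, i_n)` along the stick (with `i_l` the label at `l·e₁`) is strictly decreasing
until it reaches `0` and remains `0` thereafter. -/
theorem ground_states_reference_box_on_stick (d n m : ℕ) (hd : 2 ≤ d) (hn : 1 ≤ n)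
    (hm : 4 ≤ m) (σ : {x // x ∈ CmF d n m} → Fin (n + 1)) :
    (HtildeG n (CmF d n m)).mulVec (bvec σ) = 0 ↔
      ((∀ x : {x // x ∈ CmF d n m},
          (∀ l : ℕ, l ≤ n → (x : Fin d → ℤ) ≠ stickPt d l) → σ x = 0) ∧
        ∀ (l : ℕ), l < n → ∀ (x y : {x // x ∈ CmF d n m}),
          (x : Fin d → ℤ) = stickPt d l → (y : Fin d → ℤ) = stickPt d (l + 1) →
            ((σ y : ℕ) < (σ x : ℕ) ∨ (σ x = 0 ∧ σ y = 0))) :=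
  ground_states_reference_box_on_stick_general d n m hd σ

end PVBS
end
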